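/- arXiv:0905.2680 — 3 statements merged into one kernel-verified Lean document; each statement's English description precedes it below -/
import Mathlib

section
/- Let U be an open convex subset of ℝ^k and f a real continuous convex function on U. Then for each x ∈ U and each extreme point a of the subdifferential ∂f(x), there exists a sequence (x_n) ⊂ U such that x_n → x, f is differentiable at each x_n, and the gradients f'(x_n) converge to a. -/
/-!
Let `D ⊆ ∂f(x)` be the set of limits of gradients `f'(y)` at differentiability points `y → x`;
it is compact because `f` is locally Lipschitz. Given a direction `d`, approach `x` along `d`
through differentiability points (dense by Rademacher's theorem): a limit `v ∈ D` of their
gradients satisfies `⟪w, d⟫ ≤ ⟪v, d⟫` for every `w ∈ ∂f(x)`, by monotonicity of the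
subdifferential. So no hyperplane separates a point of `∂f(x)` from `conv D`, whence
`∂f(x) = conv D`, and the extreme points of `conv D` lie in `D`.
-/

open Filter Topology Set

noncomputable section

variable {k : ℕ}

/-- The subdifferential `∂f(x)` of `f : U → ℝ` at `x`, relative to `U`:
vectors `v` with `⟪v, y - x⟫ ≤ f y - f x` for all `y ∈ U`. -/
def subdiffR (f : EuclideanSpace ℝ (Fin k) → ℝ) (U : Set (EuclideanSpace ℝ (Fin k)))
    (x : EuclideanSpace ℝ (Fin k)) : Set (EuclideanSpace ℝ (Fin k)) :=
  {v | ∀ y ∈ U, (inner ℝ v (y - x) : ℝ) ≤ f y - f x}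

open scoped RealInnerProductSpace

theorem isCompact_convexHull {F : Type*} [NormedAddCommGroup F] [NormedSpace ℝ F]
    [FiniteDimensional ℝ F] {s : Set F} (hs : IsCompact s) : IsCompact (convexHull ℝ s) := by
  let Φ : (m : ℕ) → (Fin m → ℝ) × (Fin m → F) → F := fun _ p => ∑ i, p.1 i • p.2 i
  let T : (m : ℕ) → Set ((Fin m → ℝ) × (Fin m → F)) := fun m =>
    stdSimplex ℝ (Fin m) ×ˢ univ.pi fun _ => s
  -- Carathéodory: `finrank ℝ F + 1` points of `s` suffice for each point of the hull.
  have hhull : convexHull ℝ s = ⋃ m ∈ Finset.range (Module.finrank ℝ F + 2), Φ m '' T m := by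
    refine Subset.antisymm (fun x hx => ?_) ?_
    · obtain ⟨ι, _, z, w, hzs, hz, hw, hw1, rfl⟩ := eq_pos_convex_span_of_mem_convexHull hx
      have hcard : Fintype.card ι < Module.finrank ℝ F + 2 :=
        Nat.lt_succ_of_le (hz.card_le_finrank_succ.trans
          (Nat.succ_le_succ (Submodule.finrank_le _)))
      let e := Fintype.equivFin ι
      refine mem_biUnion (Finset.mem_range.2 hcard)
        ⟨(w ∘ e.symm, z ∘ e.symm), ⟨⟨fun i => (hw _).le, ?_⟩, fun i _ => hzs ⟨_, rfl⟩⟩, ?_⟩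
      · simpa [Function.comp_def] using (e.symm.sum_comp w).trans hw1
      · exact e.symm.sum_comp fun i => w i • z i
    · refine iUnion₂_subset fun m _ => ?_
      rintro - ⟨p, ⟨⟨hp0, hp1⟩, hps⟩, rfl⟩
      exact (convex_convexHull ℝ s).sum_mem (fun i _ => hp0 i) hp1
        fun i _ => subset_convexHull ℝ s (hps i (mem_univ i))
  rw [hhull]
  refine (Finset.range _).isCompact_biUnion fun m _ => ?_
  exact ((isCompact_stdSimplex ℝ (Fin m)).prod (isCompact_univ_pi fun _ => hs)).image
    (by fun_prop)

theorem subset_convexHull_of_forall_exists_inner_le {F : Type*} [NormedAddCommGroup F]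
    [InnerProductSpace ℝ F] [FiniteDimensional ℝ F] {C D : Set F} (hD : IsCompact D)
    (h : ∀ d, ∃ v ∈ D, ∀ w ∈ C, ⟪w, d⟫ ≤ ⟪v, d⟫) : C ⊆ convexHull ℝ D := by
  intro w hw
  by_contra hwD
  obtain ⟨ℓ, u, hℓD, hℓw⟩ := geometric_hahn_banach_closed_point (convex_convexHull ℝ D)
    (isCompact_convexHull hD).isClosed hwD
  set d := (InnerProductSpace.toDual ℝ F).symm ℓ
  have hℓ (y : F) : ℓ y = ⟪y, d⟫ := by rw [real_inner_comm, InnerProductSpace.toDual_symm_apply]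
  obtain ⟨v, hvD, hv⟩ := h d
  have hvu : ⟪v, d⟫ < u := hℓ v ▸ hℓD v (subset_convexHull ℝ D hvD)
  have huw : u < ⟪w, d⟫ := hℓ w ▸ hℓw
  exact (hv w hw).not_gt (hvu.trans huw)

theorem LipschitzOnWith.subset_closure_setOf_differentiableAt {F G : Type*}
    [NormedAddCommGroup F] [NormedSpace ℝ F] [FiniteDimensional ℝ F]
    [NormedAddCommGroup G] [NormedSpace ℝ G] [FiniteDimensional ℝ G]
    {f : F → G} {K : NNReal} {S : Set F} (hf : LipschitzOnWith K f S) (hS : IsOpen S) :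
    S ⊆ closure {y ∈ S | DifferentiableAt ℝ f y} := by
  borelize F
  intro c hc
  refine Metric.mem_closure_iff.2 fun ε hε => ?_
  have hpos : MeasureTheory.Measure.addHaar (S ∩ Metric.ball c ε) ≠ 0 :=
    ((hS.inter Metric.isOpen_ball).measure_pos _ ⟨c, hc, Metric.mem_ball_self hε⟩).ne'
  obtain ⟨y, ⟨hyS, hyc⟩, hy⟩ := MeasureTheory.Measure.exists_mem_of_measure_ne_zero_of_ae hpos
    ((MeasureTheory.ae_restrict_iff' (hS.inter Metric.isOpen_ball).measurableSet).2
      (hf.ae_differentiableWithinAt_of_mem.mono fun y hy hyS => hy hyS.1))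
  exact ⟨y, ⟨hyS, hy.differentiableAt (hS.mem_nhds hyS)⟩, by rwa [dist_comm, ← Metric.mem_ball]⟩

theorem exists_seq_tendsto_inv_smul_sub {F : Type*} [NormedAddCommGroup F] [NormedSpace ℝ F]
    {A : Set F} {x : F} (hA : closure A ∈ 𝓝 x) (d : F) :
    ∃ (t : ℕ → ℝ) (y : ℕ → F), (∀ n, 0 < t n ∧ y n ∈ A) ∧ Tendsto y atTop (𝓝 x) ∧
      Tendsto (fun n => (t n)⁻¹ • (y n - x)) atTop (𝓝 d) := by
  have hline : Tendsto (fun t : ℝ => x + t • d) (𝓝[>] 0) (𝓝 x) := by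
    simpa using ((tendsto_id.smul_const d).const_add x).mono_left (nhdsWithin_le_nhds (a := (0:ℝ)))
  have hexists : ∀ n : ℕ, ∃ t : ℝ, (0 < t ∧ t < 1 / (n + 1)) ∧ ∃ y ∈ A,
      dist (x + t • d) y < t / (n + 1) := by
    intro n
    obtain ⟨t, ht, htA⟩ := (Eventually.and (Ioo_mem_nhdsGT (by positivity : (0:ℝ) < 1 / (n + 1)))
      (hline.eventually hA)).exists
    exact ⟨t, ht, Metric.mem_closure_iff.1 htA _ (div_pos ht.1 (by positivity))⟩
  choose t ht y hyA hy using hexists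
  have hdir : ∀ n, dist ((t n)⁻¹ • (y n - x)) d < 1 / (n + 1) := by
    intro n
    have : (t n)⁻¹ • (y n - x) - d = (t n)⁻¹ • (y n - (x + t n • d)) := by
      rw [smul_sub, smul_sub (t n)⁻¹ (y n), smul_add, inv_smul_smul₀ (ht n).1.ne']; abel
    rw [dist_eq_norm, this, norm_smul, norm_inv, Real.norm_of_nonneg (ht n).1.le,
      ← dist_eq_norm, dist_comm, inv_mul_lt_iff₀ (ht n).1, mul_one_div]
    exact hy n
  have ht0 : Tendsto t atTop (𝓝 0) :=
    squeeze_zero (fun n => (ht n).1.le) (fun n => (ht n).2.le)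
      tendsto_one_div_add_atTop_nhds_zero_nat
  have hd : Tendsto (fun n => (t n)⁻¹ • (y n - x)) atTop (𝓝 d) :=
    tendsto_iff_dist_tendsto_zero.2 (squeeze_zero (fun n => dist_nonneg) (fun n => (hdir n).le)
      tendsto_one_div_add_atTop_nhds_zero_nat)
  refine ⟨t, y, fun n => ⟨(ht n).1, hyA n⟩, ?_, hd⟩
  have hy_eq : y = fun n => x + t n • ((t n)⁻¹ • (y n - x)) := by
    ext1 n; rw [smul_inv_smul₀ (ht n).1.ne', add_sub_cancel]
  rw [hy_eq]
  simpa using (ht0.smul hd).const_add x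

local notation "E" => EuclideanSpace ℝ (Fin k)

theorem convex_subdiffR (f : E → ℝ) (U : Set E) (x : E) : Convex ℝ (subdiffR f U x) := by
  intro v hv w hw a b ha hb hab y hy
  rw [inner_add_left, real_inner_smul_left, real_inner_smul_left]
  calc a * ⟪v, y - x⟫ + b * ⟪w, y - x⟫
      ≤ a * (f y - f x) + b * (f y - f x) :=
        add_le_add (mul_le_mul_of_nonneg_left (hv y hy) ha) (mul_le_mul_of_nonneg_left (hw y hy) hb)
    _ = f y - f x := by rw [← add_mul, hab, one_mul]

theorem inner_sub_nonneg_of_mem_subdiffR {f : E → ℝ} {U : Set E} {x y v w : E} (hx : x ∈ U)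
    (hy : y ∈ U) (hv : v ∈ subdiffR f U x) (hw : w ∈ subdiffR f U y) :
    0 ≤ ⟪w - v, y - x⟫ := by
  have hwx := hw x hx
  rw [← neg_sub, inner_neg_right] at hwx
  rw [inner_sub_left]
  linarith [hv y hy]

theorem gradient_mem_subdiffR {f : E → ℝ} {U : Set E} (hf : ConvexOn ℝ U f) {y : E}
    (hy : y ∈ U) (hd : DifferentiableAt ℝ f y) : gradient f y ∈ subdiffR f U y := by
  intro z hz
  let γ : ℝ →ᵃ[ℝ] E := AffineMap.lineMap y z
  have hγ0 : γ 0 = y := AffineMap.lineMap_apply_zero y z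
  have hγ1 : γ 1 = z := AffineMap.lineMap_apply_one y z
  have hderiv : HasDerivAt (f ∘ γ) (fderiv ℝ f y (z - y)) 0 := by
    have := (hγ0 ▸ hd).hasFDerivAt.comp_hasDerivAt (0 : ℝ) AffineMap.hasDerivAt_lineMap
    rwa [hγ0] at this
  have := (hf.comp_affineMap γ).le_slope_of_hasDerivAt (by simpa [hγ0] using hy)
    (by simpa [hγ1] using hz) one_pos hderiv
  simpa [slope_def_field, hγ0, hγ1, InnerProductSpace.toDual_symm_apply, gradient] using this

theorem eq_gradient_of_mem_subdiffR {f : E → ℝ} {U : Set E} {y v : E} (hU : U ∈ 𝓝 y)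
    (hd : DifferentiableAt ℝ f y) (hv : v ∈ subdiffR f U y) : v = gradient f y := by
  -- `y` minimizes `f - ⟪v, ·⟫` on `U`, so the derivative of that difference vanishes at `y`.
  have hmin : IsLocalMin (fun z => f z - ⟪v, z⟫) y :=
    Filter.mem_of_superset hU fun z hz => by
      have := hv z hz
      rw [inner_sub_right] at this
      show f y - ⟪v, y⟫ ≤ f z - ⟪v, z⟫
      linarith
  have h0 := hmin.hasFDerivAt_eq_zero (hd.hasFDerivAt.sub (innerSL ℝ v).hasFDerivAt)
  rw [sub_eq_zero] at h0
  rw [gradient, h0]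
  exact ((InnerProductSpace.toDual ℝ E).symm_apply_apply v).symm

theorem subdiffR_eq_singleton_gradient {f : E → ℝ} {U : Set E} (hU : IsOpen U)
    (hf : ConvexOn ℝ U f) {y : E} (hy : y ∈ U) (hd : DifferentiableAt ℝ f y) :
    subdiffR f U y = {gradient f y} :=
  Subset.antisymm (fun _ hv => eq_gradient_of_mem_subdiffR (hU.mem_nhds hy) hd hv)
    (singleton_subset_iff.2 (gradient_mem_subdiffR hf hy hd))

theorem norm_le_of_mem_subdiffR {f : E → ℝ} {U S : Set E} {K : NNReal} {y v : E}
    (hS : S ∈ 𝓝 y) (hSU : S ⊆ U) (hf : LipschitzOnWith K f S) (hv : v ∈ subdiffR f U y) :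
    ‖v‖ ≤ K := by
  rcases eq_or_ne v 0 with rfl | hv0
  · simp
  obtain ⟨ρ, hρ, hρS⟩ := Metric.mem_nhds_iff.1 hS
  set z := y + (ρ / 2 * ‖v‖⁻¹) • v
  have hzy : dist z y = ρ / 2 := by
    rw [dist_self_add_left, norm_smul, Real.norm_of_nonneg (by positivity),
      inv_mul_cancel_right₀ (norm_ne_zero_iff.2 hv0)]
  have hzS : z ∈ S := hρS (by rw [Metric.mem_ball, hzy]; linarith)
  have hinner : ⟪v, z - y⟫ = ρ / 2 * ‖v‖ := by
    rw [add_sub_cancel_left, real_inner_smul_right, real_inner_self_eq_norm_sq]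
    field_simp
  have hlip : f z - f y ≤ K * dist z y := (le_abs_self _).trans <| by
    simpa only [Real.dist_eq] using hf.dist_le_mul z hzS y (mem_of_mem_nhds hS)
  have : ρ / 2 * ‖v‖ ≤ ρ / 2 * K := calc
    ρ / 2 * ‖v‖ = ⟪v, z - y⟫ := hinner.symm
    _ ≤ f z - f y := hv z (hSU hzS)
    _ ≤ K * dist z y := hlip
    _ = ρ / 2 * K := by rw [hzy, mul_comm]
  exact le_of_mul_le_mul_left this (by positivity)

theorem mem_subdiffR_of_tendsto {f : E → ℝ} {U : Set E} {x w : E}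
    (hfx : ContinuousWithinAt f U x) {y v : ℕ → E} (hyU : ∀ n, y n ∈ U)
    (hyx : Tendsto y atTop (𝓝 x)) (hv : ∀ n, v n ∈ subdiffR f U (y n))
    (hvw : Tendsto v atTop (𝓝 w)) : w ∈ subdiffR f U x := by
  intro z hz
  have hfy : Tendsto (f ∘ y) atTop (𝓝 (f x)) :=
    hfx.tendsto.comp (tendsto_nhdsWithin_iff.2 ⟨hyx, Eventually.of_forall hyU⟩)
  exact le_of_tendsto_of_tendsto' (hvw.inner (tendsto_const_nhds.sub hyx))
    (tendsto_const_nhds.sub hfy) fun n => hv n z hz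

def reachableGradients (f : E → ℝ) (U : Set E) (x : E) : Set E :=
  {v | (x, v) ∈ closure {p : E × E | p.1 ∈ U ∧ DifferentiableAt ℝ f p.1 ∧ gradient f p.1 = p.2}}

theorem isClosed_reachableGradients (f : E → ℝ) (U : Set E) (x : E) :
    IsClosed (reachableGradients f U x) :=
  isClosed_closure.preimage (Continuous.prodMk_right x)

theorem mem_reachableGradients_iff {f : E → ℝ} {U : Set E} {x v : E} :
    v ∈ reachableGradients f U x ↔ ∃ y : ℕ → E, (∀ n, y n ∈ U ∧ DifferentiableAt ℝ f (y n)) ∧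
      Tendsto y atTop (𝓝 x) ∧ Tendsto (fun n => gradient f (y n)) atTop (𝓝 v) := by
  simp only [reachableGradients, mem_closure_iff_seq_limit, nhds_prod_eq, tendsto_prod_iff']
  constructor
  · rintro ⟨p, hp, hpx, hpv⟩
    refine ⟨fun n => (p n).1, fun n => ⟨(hp n).1, (hp n).2.1⟩, hpx, ?_⟩
    simpa only [(hp _).2.2] using hpv
  · rintro ⟨y, hy, hyx, hyv⟩
    exact ⟨fun n => (y n, gradient f (y n)), fun n => ⟨(hy n).1, (hy n).2, rfl⟩, hyx, hyv⟩

theorem reachableGradients_subset_subdiffR {f : E → ℝ} {U : Set E} {x : E}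
    (hf : ConvexOn ℝ U f) (hfx : ContinuousWithinAt f U x) :
    reachableGradients f U x ⊆ subdiffR f U x := by
  intro v hv
  obtain ⟨y, hy, hyx, hyv⟩ := mem_reachableGradients_iff.1 hv
  exact mem_subdiffR_of_tendsto hfx (fun n => (hy n).1) hyx
    (fun n => gradient_mem_subdiffR hf (hy n).1 (hy n).2) hyv

theorem exists_mem_reachableGradients_forall_inner_le {f : E → ℝ} {U S : Set E} {K : NNReal}
    {x : E} (hf : ConvexOn ℝ U f) (hS : IsOpen S) (hxS : x ∈ S) (hSU : S ⊆ U)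
    (hfS : LipschitzOnWith K f S) (d : E) :
    ∃ v ∈ reachableGradients f U x, ∀ w ∈ subdiffR f U x, ⟪w, d⟫ ≤ ⟪v, d⟫ := by
  obtain ⟨t, y, hty, hyx, hd⟩ := exists_seq_tendsto_inv_smul_sub
    (Filter.mem_of_superset (hS.mem_nhds hxS) (hfS.subset_closure_setOf_differentiableAt hS)) d
  have hyU n : y n ∈ U := hSU (hty n).2.1
  have hgrad n : gradient f (y n) ∈ subdiffR f U (y n) :=
    gradient_mem_subdiffR hf (hyU n) (hty n).2.2
  have hbound n : gradient f (y n) ∈ Metric.closedBall 0 K := mem_closedBall_zero_iff.2 <|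
    norm_le_of_mem_subdiffR (hS.mem_nhds (hty n).2.1) hSU hfS (hgrad n)
  obtain ⟨v, -, φ, hφ, hv⟩ := tendsto_subseq_of_bounded Metric.isBounded_closedBall hbound
  refine ⟨v, mem_reachableGradients_iff.2
    ⟨y ∘ φ, fun n => ⟨hyU _, (hty _).2.2⟩, hyx.comp hφ.tendsto_atTop, hv⟩, fun w hw => ?_⟩
  have hmono n : ⟪w, (t n)⁻¹ • (y n - x)⟫ ≤ ⟪gradient f (y n), (t n)⁻¹ • (y n - x)⟫ := by
    have := inner_sub_nonneg_of_mem_subdiffR (hSU hxS) (hyU n) hw (hgrad n)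
    rw [inner_sub_left] at this
    rw [real_inner_smul_right, real_inner_smul_right]
    exact mul_le_mul_of_nonneg_left (by linarith) (inv_nonneg.2 (hty n).1.le)
  exact le_of_tendsto_of_tendsto' (tendsto_const_nhds.inner (hd.comp hφ.tendsto_atTop))
    (hv.inner (hd.comp hφ.tendsto_atTop)) fun n => hmono (φ n)

theorem subdiffR_eq_convexHull_reachableGradients {f : E → ℝ} {U : Set E} {x : E}
    (hU : IsOpen U) (hf : ConvexOn ℝ U f) (hx : x ∈ U) :
    subdiffR f U x = convexHull ℝ (reachableGradients f U x) := by
  obtain ⟨K, t, ht, hK⟩ := hf.locallyLipschitzOn hU hx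
  rw [hU.nhdsWithin_eq hx] at ht
  have hS : interior (t ∩ U) ∈ 𝓝 x := interior_mem_nhds.2 (inter_mem ht (hU.mem_nhds hx))
  have hSU : interior (t ∩ U) ⊆ U := interior_subset.trans inter_subset_right
  have hfS : LipschitzOnWith K f (interior (t ∩ U)) :=
    hK.mono (interior_subset.trans inter_subset_left)
  have hR : reachableGradients f U x ⊆ subdiffR f U x :=
    reachableGradients_subset_subdiffR hf ((hf.continuousOn hU).continuousWithinAt hx)
  have hRcompact : IsCompact (reachableGradients f U x) :=
    Metric.isCompact_of_isClosed_isBounded (isClosed_reachableGradients f U x)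
      (Metric.isBounded_closedBall.subset fun v hv => mem_closedBall_zero_iff.2 <|
        norm_le_of_mem_subdiffR hS hSU hfS (hR hv))
  refine Subset.antisymm (subset_convexHull_of_forall_exists_inner_le hRcompact fun d => ?_)
    (convexHull_min hR (convex_subdiffR f U x))
  exact exists_mem_reachableGradients_forall_inner_le hf isOpen_interior (mem_of_mem_nhds hS)
    hSU hfS d

theorem stmt0_general (U : Set (EuclideanSpace ℝ (Fin k))) (hUopen : IsOpen U)
    (f : EuclideanSpace ℝ (Fin k) → ℝ) (hconv : ConvexOn ℝ U f)
    (x : EuclideanSpace ℝ (Fin k)) (hx : x ∈ U)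
    (a : EuclideanSpace ℝ (Fin k)) (ha : a ∈ Set.extremePoints ℝ (subdiffR f U x)) :
    ∃ (xs : ℕ → EuclideanSpace ℝ (Fin k)) (g : ℕ → EuclideanSpace ℝ (Fin k)),
      (∀ n, xs n ∈ U) ∧
      Tendsto xs atTop (𝓝 x) ∧
      (∀ n, subdiffR f U (xs n) = {g n}) ∧
      Tendsto g atTop (𝓝 a) := by
  rw [subdiffR_eq_convexHull_reachableGradients hUopen hconv hx] at ha
  obtain ⟨xs, hxs, hxsx, hg⟩ := mem_reachableGradients_iff.1 (extremePoints_convexHull_subset ha)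
  exact ⟨xs, fun n => gradient f (xs n), fun n => (hxs n).1, hxsx,
    fun n => subdiffR_eq_singleton_gradient hUopen hconv (hxs n).1 (hxs n).2, hg⟩

/-- Proposition 2.2: for a continuous convex function `f` on an open
convex set `U ⊆ ℝ^k`, every extreme point `a` of `∂f(x)` is a limit of gradients
`f'(x_n)` at differentiability points `x_n → x` (differentiability at a point
meaning that the subdifferential there is a singleton, whose element is the gradient). -/
theorem stmt0 (U : Set (EuclideanSpace ℝ (Fin k))) (hUopen : IsOpen U) (hUconv : Convex ℝ U)
    (f : EuclideanSpace ℝ (Fin k) → ℝ) (hconv : ConvexOn ℝ U f) (hcont : ContinuousOn f U)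
    (x : EuclideanSpace ℝ (Fin k)) (hx : x ∈ U)
    (a : EuclideanSpace ℝ (Fin k)) (ha : a ∈ Set.extremePoints ℝ (subdiffR f U x)) :
    ∃ (xs : ℕ → EuclideanSpace ℝ (Fin k)) (g : ℕ → EuclideanSpace ℝ (Fin k)),
      (∀ n, xs n ∈ U) ∧
      Tendsto xs atTop (𝓝 x) ∧
      (∀ n, subdiffR f U (xs n) = {g n}) ∧
      Tendsto g atTop (𝓝 a) :=
  stmt0_general U hUopen f hconv x hx a ha
end
end

section
/- Let Φ = {log φ_n} be an asymptotically sub-additive potential on a TDS (X,T). The map μ ↦ Φ_*(μ) from the space of T-invariant Borel probability measures (with the weak* topology) to ℝ ∪ {-∞} is upper semi-continuous, and there exists a constant C ∈ ℝ such that Φ_*(μ) ≤ C for all invariant μ. -/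
open MeasureTheory Filter Topology Set
open scoped ENNReal NNReal

noncomputable section

/-- Extended logarithm of a nonnegative real number, with `elog 0 = ⊥`. -/
def elog (r : ℝ) : EReal := if r = 0 then ⊥ else ((Real.log r : ℝ) : EReal)

/-- Extended logarithm on `ℝ≥0∞`. -/
def elogENN (a : ℝ≥0∞) : EReal :=
  if a = 0 then ⊥ else if a = ⊤ then ⊤ else ((Real.log a.toReal : ℝ) : EReal)

variable {X : Type*} [MetricSpace X] [CompactSpace X] [MeasurableSpace X] [BorelSpace X]

/-- A potential: each `φ n` is continuous and nonnegative.  The potential itself is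
the sequence `{log φ n}` with values in `ℝ ∪ {-∞}`. -/
def IsPotential (φ : ℕ → X → ℝ) : Prop :=
  ∀ n, Continuous (φ n) ∧ ∀ x, 0 ≤ φ n x

/-- Sub-additive potential: `φ (n+m) x ≤ φ n x * φ m (T^[n] x)`, i.e.
`log φ (n+m) ≤ log φ n + log φ m ∘ T^n`. -/
def IsSubAdditivePot (T : X → X) (φ : ℕ → X → ℝ) : Prop :=
  IsPotential φ ∧ ∀ n m x, φ (n + m) x ≤ φ n x * φ m (T^[n] x)

/-- `limsup_n (1/n) sup_x |log φ n x - log ψ n x| ≤ ε`, with the convention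
`log 0 - log 0 = 0` (and `|log 0 - log c| = ∞` for `c ≠ 0`). -/
def ApproxAtScale (φ ψ : ℕ → X → ℝ) (ε : ℝ) : Prop :=
  ∀ ε' > ε, ∀ᶠ n : ℕ in atTop, ∀ x : X,
    (φ n x = 0 ↔ ψ n x = 0) ∧
    (φ n x ≠ 0 → |Real.log (φ n x) - Real.log (ψ n x)| ≤ n * ε')

/-- Asymptotically sub-additive potential. -/
def IsAsympSubAdditive (T : X → X) (φ : ℕ → X → ℝ) : Prop :=
  IsPotential φ ∧ ∀ ε > 0, ∃ ψ : ℕ → X → ℝ, IsSubAdditivePot T ψ ∧ ApproxAtScale φ ψ ε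

/-- Asymptotically additive potential (via approximation by genuinely additive
potentials `ψ n x = exp (∑_{i<n} g (T^i x))`). -/
def IsAsympAdditive (T : X → X) (φ : ℕ → X → ℝ) : Prop :=
  IsPotential φ ∧ ∀ ε > 0, ∃ g : X → ℝ, Continuous g ∧
    ApproxAtScale φ (fun n x => Real.exp (∑ i ∈ Finset.range n, g (T^[i] x))) ε

/-- `∫ log f dμ ∈ ℝ ∪ {-∞}`, as the infimum of the integrals of the truncations
`log (max f (exp (-R)))`. -/
def elogInt (μ : Measure X) (f : X → ℝ) : EReal :=
  ⨅ R : ℕ, ((∫ x, Real.log (max (f x) (Real.exp (-(R : ℝ)))) ∂μ : ℝ) : EReal)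

/-- `Φ_*(μ) = lim_n (1/n) ∫ log φ n dμ` (written as a `limsup`, which equals the
limit whenever the latter exists). -/
def potStar (μ : Measure X) (φ : ℕ → X → ℝ) : EReal :=
  limsup (fun n : ℕ => (((n : ℝ)⁻¹ : ℝ) : EReal) * elogInt μ (φ n)) atTop

/-- The sequence `(1/n) log φ n x`, whose limit (when it exists) is the Lyapunov
exponent `λ_Φ(x)`. -/
def lyapSeq (φ : ℕ → X → ℝ) (x : X) : ℕ → EReal :=
  fun n => (((n : ℝ)⁻¹ : ℝ) : EReal) * elog (φ n x)

/-- The `α`-level set `E_Φ(α) = {x : λ_Φ(x) = α}`. -/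
def levelSet (φ : ℕ → X → ℝ) (α : EReal) : Set X :=
  {x | Tendsto (lyapSeq φ x) atTop (𝓝 α)}

/-- `β̄(Φ) = limsup_n (1/n) sup_x log φ n x`. -/
def betaBar (φ : ℕ → X → ℝ) : EReal :=
  limsup (fun n : ℕ => (((n : ℝ)⁻¹ : ℝ) : EReal) * ⨆ x : X, elog (φ n x)) atTop

/-- `β̲(Φ) = limsup_n (1/n) inf_x log φ n x`. -/
def betaLow (φ : ℕ → X → ℝ) : EReal :=
  limsup (fun n : ℕ => (((n : ℝ)⁻¹ : ℝ) : EReal) * ⨅ x : X, elog (φ n x)) atTop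

/-- `μ` is a `T`-invariant Borel probability measure. -/
def InvProb (T : X → X) (μ : Measure X) : Prop :=
  IsProbabilityMeasure μ ∧ μ.map T = μ

/-- Entropy of the finite partition of `X` induced by `p`. -/
def partEnt (μ : Measure X) {S : Type} [Fintype S] (p : X → S) : ℝ :=
  ∑ s : S, Real.negMulLog (μ (p ⁻¹' {s})).toReal

/-- Measure-theoretic (Kolmogorov–Sinai) entropy `h_μ(T)`: supremum over finite
measurable partitions of `lim (1/n) H(⋁_{i<n} T^{-i} P)` (the limit is the inf). -/
def mEnt (T : X → X) (μ : Measure X) : EReal :=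
  ⨆ (m : ℕ) (p : X → Fin m) (_ : Measurable p),
    ⨅ (n : ℕ) (_ : 0 < n),
      (((n : ℝ)⁻¹ * partEnt μ (fun x (i : Fin n) => p (T^[(i : ℕ)] x)) : ℝ) : EReal)

/-- Bowen ball `B_n(x, ε)` in the metric `d_n`. -/
def dynBall (T : X → X) (x : X) (n : ℕ) (ε : ℝ) : Set X :=
  {y | ∀ k < n, dist (T^[k] x) (T^[k] y) < ε}

/-- `M(Z, s, N, ε)`: infimum of `∑ exp (-s n_i)` over countable covers of `Z` by
Bowen balls `B_{n_i}(x_i, ε)` with `n_i ≥ N`. -/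
def bowenM (T : X → X) (Z : Set X) (s : ℝ) (N : ℕ) (ε : ℝ) : ℝ≥0∞ :=
  ⨅ (c : ℕ → X × ℕ) (_ : ∀ i, N ≤ (c i).2)
    (_ : Z ⊆ ⋃ i, dynBall T (c i).1 (c i).2 ε),
    ∑' i, ENNReal.ofReal (Real.exp (-(s * ((c i).2 : ℝ))))

/-- Bowen's topological entropy of `Z` at scale `ε`: the critical value of `s` at
which `M(Z, s, ε) = lim_N M(Z, s, N, ε)` jumps from `∞` to `0`. -/
def entAt (T : X → X) (Z : Set X) (ε : ℝ) : EReal :=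
  sInf {s : EReal | ∃ r : ℝ, s = (r : EReal) ∧ (⨆ N, bowenM T Z r N ε) = 0}

/-- Bowen's topological entropy `h_top(T, Z)` of an arbitrary subset `Z ⊆ X`. -/
def entOf (T : X → X) (Z : Set X) : EReal :=
  ⨆ (ε : ℝ) (_ : 0 < ε), entAt T Z ε

/-- `(n, ε)`-separated subset of `X`. -/
def IsSep (T : X → X) (n : ℕ) (ε : ℝ) (E : Finset X) : Prop :=
  ∀ x ∈ E, ∀ y ∈ E, x ≠ y → ∃ k < n, ε < dist (T^[k] x) (T^[k] y)

/-- `P_n(T, Φ, ε) = sup { ∑_{x ∈ E} φ n x : E is (n,ε)-separated }`. -/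
def sepSum (T : X → X) (φ : ℕ → X → ℝ) (n : ℕ) (ε : ℝ) : ℝ≥0∞ :=
  ⨆ (E : Finset X) (_ : IsSep T n ε E), ∑ x ∈ E, ENNReal.ofReal (φ n x)

/-- Topological pressure `P(T, Φ) = lim_{ε→0} limsup_n (1/n) log P_n(T, Φ, ε)`. -/
def pressure (T : X → X) (φ : ℕ → X → ℝ) : EReal :=
  ⨆ (ε : ℝ) (_ : 0 < ε),
    limsup (fun n : ℕ => (((n : ℝ)⁻¹ : ℝ) : EReal) * elogENN (sepSum T φ n ε)) atTop

/-- The potential `q · Φ = {∑ i, q i * log (φ i) n}`, i.e. `∏ i, (φ i n) ^ (q i)`. -/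
def weightedPot {k : ℕ} (φ : Fin k → ℕ → X → ℝ) (q : Fin k → ℝ) : ℕ → X → ℝ :=
  fun n x => ∏ i, (φ i n x) ^ (q i)

/-- The potential `Φ₁ + ⋯ + Φ_k`, i.e. `∏ i, φ i n`. -/
def sumPot {k : ℕ} (φ : Fin k → ℕ → X → ℝ) : ℕ → X → ℝ :=
  fun n x => ∏ i, φ i n x

end

/-- Dot product on `Fin k → ℝ`. -/
def dotp {k : ℕ} (a b : Fin k → ℝ) : ℝ := ∑ i, a i * b i

/-- The open positive orthant `ℝ_+^k`. -/
def posOrth (k : ℕ) : Set (Fin k → ℝ) := {q | ∀ i, 0 < q i}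

/-- `a` is a subgradient of `F` at `q` relative to `U`. -/
def IsSubgrad {k : ℕ} (U : Set (Fin k → ℝ)) (F : (Fin k → ℝ) → ℝ) (q a : Fin k → ℝ) : Prop :=
  ∀ t ∈ U, dotp a (t - q) ≤ F t - F q

/-!
For a sub-additive `Ψ` and an invariant `μ`, splitting `n = qM + r` into blocks of length `M`
gives `Ψ_*(μ) ≤ (1/M) ∫ log ψ_M dμ`; the reverse inequality for some `M` is immediate from the
definition of the `limsup`, so `Ψ_*(μ) = inf_M (1/M) ∫ log ψ_M dμ`. Truncating `log` from below
at `-R` (and taking the infimum over `R` too) makes every term continuous in `μ` for the weak*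
topology. An asymptotically sub-additive `Φ` is `ε`-close to such a `Ψ` uniformly in `μ`, so on
invariant measures `Φ_*` is an infimum of continuous functions, hence upper semicontinuous, and the
term `M = 1` bounds it uniformly.
-/

open Real

lemma EReal.limsup_inv_mul_le_of_eventually_le {u : ℕ → EReal} {a : ℝ}
    (h : ∀ᶠ n in atTop, u n ≤ ((n * a : ℝ) : EReal)) :
    limsup (fun n : ℕ => (((n : ℝ)⁻¹ : ℝ) : EReal) * u n) atTop ≤ a := by
  refine limsup_le_of_le (by isBoundedDefault) ?_
  filter_upwards [h, eventually_gt_atTop 0] with n hn hn0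
  calc (((n : ℝ)⁻¹ : ℝ) : EReal) * u n ≤ (((n : ℝ)⁻¹ : ℝ) : EReal) * ((n * a : ℝ) : EReal) :=
        mul_le_mul_of_nonneg_left hn (by exact_mod_cast inv_nonneg.2 n.cast_nonneg)
    _ = a := by rw [← EReal.coe_mul, inv_mul_cancel_left₀ (by positivity)]

lemma EReal.lt_mul_of_inv_mul_lt {r s : ℝ} (hr : 0 < r) {x : EReal}
    (h : ((r⁻¹ : ℝ) : EReal) * x < s) : x < ((r * s : ℝ) : EReal) := by
  by_contra! hx
  refine h.not_ge ?_
  calc (s : EReal) = ((r⁻¹ : ℝ) : EReal) * ((r * s : ℝ) : EReal) := by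
        rw [← EReal.coe_mul, inv_mul_cancel_left₀ hr.ne']
    _ ≤ ((r⁻¹ : ℝ) : EReal) * x :=
        mul_le_mul_of_nonneg_left hx (by exact_mod_cast (inv_pos.2 hr).le)

lemma Real.log_max_le_of_le_mul {a b c α β : ℝ} (hc : 0 ≤ c) (h : a ≤ b * c)
    (hα : 0 < α) (hβ : 0 < β) :
    log (max a (α * β)) ≤ log (max b α) + log (max c β) := by
  rw [← log_mul (by positivity) (by positivity)]
  refine log_le_log (by positivity) (max_le (h.trans ?_) ?_) <;>
    gcongr <;> first | exact le_max_left _ _ | exact le_max_right _ _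

lemma Continuous.log_max {X : Type*} [TopologicalSpace X] {g : X → ℝ} (hg : Continuous g)
    {c : ℝ} (hc : 0 < c) : Continuous fun x => Real.log (max (g x) c) :=
  (hg.max continuous_const).log fun _ => (hc.trans_le (le_max_right _ _)).ne'

lemma UpperSemicontinuousOn.congr {α β : Type*} [TopologicalSpace α] [Preorder β] {f g : α → β}
    {s : Set α} (h : UpperSemicontinuousOn f s) (hfg : EqOn f g s) : UpperSemicontinuousOn g s :=
  fun x hx => UpperSemicontinuousWithinAt.congr_of_eventuallyEq (h x hx) hx
    (eventually_nhdsWithin_of_forall hfg)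

lemma MeasureTheory.MeasurePreserving.integral_comp_of_aestronglyMeasurable
    {α β : Type*} [MeasurableSpace α] [MeasurableSpace β] {μ : Measure α} {ν : Measure β}
    {f : α → β} (hf : MeasurePreserving f μ ν) {g : β → ℝ} (hg : AEStronglyMeasurable g ν) :
    ∫ x, g (f x) ∂μ = ∫ y, g y ∂ν := by
  rw [← hf.map_eq] at hg ⊢
  exact (integral_map hf.measurable.aemeasurable hg).symm

lemma ApproxAtScale.symm {X : Type*} {φ ψ : ℕ → X → ℝ} {ε : ℝ} (h : ApproxAtScale φ ψ ε) :
    ApproxAtScale ψ φ ε := by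
  intro ε' hε'
  filter_upwards [h ε' hε'] with n hn x
  obtain ⟨hzero, hlog⟩ := hn x
  exact ⟨hzero.symm, fun hψ => abs_sub_comm (log (φ n x)) _ ▸ hlog (hzero.not.2 hψ)⟩

lemma ApproxAtScale.eventually_le_exp_mul {X : Type*} {φ ψ : ℕ → X → ℝ} {ε ε' : ℝ}
    (h : ApproxAtScale φ ψ ε) (hφ : ∀ n x, 0 ≤ φ n x) (hψ : ∀ n x, 0 ≤ ψ n x) (hε' : ε < ε') :
    ∀ᶠ n in atTop, ∀ x, φ n x ≤ exp (n * ε') * ψ n x := by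
  filter_upwards [h ε' hε'] with n hn x
  obtain ⟨hzero, hlog⟩ := hn x
  rcases (hφ n x).eq_or_lt with hφ0 | hφpos
  · rw [← hφ0]
    exact mul_nonneg (exp_pos _).le (hψ n x)
  · have hψpos : 0 < ψ n x := (hψ n x).lt_of_ne (Ne.symm (hzero.not.1 hφpos.ne'))
    calc φ n x = exp (log (φ n x)) := (exp_log hφpos).symm
      _ ≤ exp (n * ε' + log (ψ n x)) :=
          exp_le_exp.2 (by linarith [(abs_le.1 (hlog hφpos.ne')).2])
      _ = exp (n * ε') * ψ n x := by rw [exp_add, exp_log hψpos]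

section CompactSpace

variable {X : Type*} [TopologicalSpace X] [CompactSpace X] [MeasurableSpace X]
  [OpensMeasurableSpace X] {μ : Measure X}

lemma Continuous.integrable_of_compactSpace [IsFiniteMeasure μ] {g : X → ℝ} (hg : Continuous g) :
    Integrable g μ :=
  hg.integrable_of_hasCompactSupport (.of_compactSpace g)

lemma integral_log_max_le_of_le_exp_mul [IsProbabilityMeasure μ] {f g : X → ℝ}
    (hf : Continuous f) (hg : Continuous g) (hg0 : ∀ x, 0 ≤ g x) {t c : ℝ} (ht : 0 ≤ t)
    (hc : 0 < c) (h : ∀ x, f x ≤ exp t * g x) :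
    ∫ x, log (max (f x) c) ∂μ ≤ t + ∫ x, log (max (g x) c) ∂μ := by
  have hpt : ∀ x, log (max (f x) c) ≤ t + log (max (g x) c) := fun x => by
    have := log_max_le_of_le_mul (hg0 x) (h x) one_pos hc
    rwa [one_mul, max_eq_left (one_le_exp ht), log_exp] at this
  have hgc := (hg.log_max hc).integrable_of_compactSpace (μ := μ)
  calc ∫ x, log (max (f x) c) ∂μ ≤ ∫ x, (t + log (max (g x) c)) ∂μ :=
        integral_mono (hf.log_max hc).integrable_of_compactSpace ((integrable_const t).add hgc) hpt
    _ = t + ∫ x, log (max (g x) c) ∂μ := by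
        rw [integral_add (integrable_const t) hgc, integral_const, probReal_univ, one_smul]

end CompactSpace

section Potential

variable {X : Type*} [MetricSpace X] [CompactSpace X] [MeasurableSpace X] [BorelSpace X]
  {μ : Measure X} {T : X → X} {φ ψ : ℕ → X → ℝ}

lemma IsSubAdditivePot.integral_log_max_le (hψ : IsSubAdditivePot T ψ) [IsProbabilityMeasure μ]
    (hT : MeasurePreserving T μ μ) (M R r q : ℕ) :
    ∫ x, log (max (ψ (q * M + r) x) (exp (-(q * R : ℝ)))) ∂μ ≤
      q * ∫ x, log (max (ψ M x) (exp (-(R : ℝ)))) ∂μ + ∫ x, log (max (ψ r x) 1) ∂μ := by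
  induction q with
  | zero => simp
  | succ q ih =>
    set f := fun x => log (max (ψ M x) (exp (-(R : ℝ))))
    set g := fun x => log (max (ψ (q * M + r) x) (exp (-(q * R : ℝ))))
    have hf : Continuous f := (hψ.1 M).1.log_max (exp_pos _)
    have hg : Continuous g := (hψ.1 _).1.log_max (exp_pos _)
    have hpt : ∀ x, log (max (ψ ((q + 1) * M + r) x) (exp (-((q + 1 : ℕ) * R : ℝ))))
        ≤ f x + g (T^[M] x) := fun x => by
      rw [show (q + 1) * M + r = M + (q * M + r) by ring,
        show exp (-((q + 1 : ℕ) * R : ℝ)) = exp (-(R : ℝ)) * exp (-(q * R : ℝ)) by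
          rw [← exp_add]; push_cast; ring_nf]
      exact log_max_le_of_le_mul ((hψ.1 _).2 _) (hψ.2 M _ x) (exp_pos _) (exp_pos _)
    have hTM := hT.iterate M
    have hgT : Integrable (fun x => g (T^[M] x)) μ :=
      hTM.integrable_comp_of_integrable hg.integrable_of_compactSpace
    calc _ ≤ ∫ x, (f x + g (T^[M] x)) ∂μ :=
          integral_mono ((hψ.1 _).1.log_max (exp_pos _)).integrable_of_compactSpace
            (hf.integrable_of_compactSpace.add hgT) hpt
      _ = ∫ x, f x ∂μ + ∫ x, g x ∂μ := by
          rw [integral_add hf.integrable_of_compactSpace hgT,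
            hTM.integral_comp_of_aestronglyMeasurable hg.aestronglyMeasurable]
      _ ≤ _ := by push_cast; linarith

lemma IsSubAdditivePot.elogInt_le (hψ : IsSubAdditivePot T ψ) [IsProbabilityMeasure μ]
    (hT : MeasurePreserving T μ μ) {f : X → ℝ} (hf : Continuous f) {t : ℝ} (ht : 0 ≤ t)
    {M r q : ℕ} (R : ℕ) (h : ∀ x, f x ≤ exp t * ψ (q * M + r) x) :
    elogInt μ f ≤ ((t + (q * ∫ x, log (max (ψ M x) (exp (-(R : ℝ)))) ∂μ
      + ∫ x, log (max (ψ r x) 1) ∂μ) : ℝ) : EReal) := by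
  refine (iInf_le _ (q * R)).trans (EReal.coe_le_coe_iff.2 ?_)
  rw [Nat.cast_mul]
  exact (integral_log_max_le_of_le_exp_mul hf (hψ.1 _).1 (hψ.1 _).2 ht (exp_pos _) h).trans
    ((add_le_add_iff_left t).2 (hψ.integral_log_max_le hT M R r q))

noncomputable def truncLogRate (ψ : ℕ → X → ℝ) (μ : Measure X) (M R : ℕ) : ℝ :=
  (M : ℝ)⁻¹ * ∫ x, log (max (ψ M x) (exp (-(R : ℝ)))) ∂μ

lemma potStar_le_truncLogRate_add [IsProbabilityMeasure μ] (hT : MeasurePreserving T μ μ)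
    (hφ : ∀ n, Continuous (φ n)) (hψ : IsSubAdditivePot T ψ) {ε : ℝ} (hε : 0 ≤ ε)
    (hdom : ∀ᶠ n in atTop, ∀ x, φ n x ≤ exp (n * ε) * ψ n x) {M : ℕ} (hM : 0 < M) (R : ℕ) :
    potStar μ φ ≤ ((truncLogRate ψ μ M R + ε : ℝ) : EReal) := by
  set c := ∫ x, log (max (ψ M x) (exp (-(R : ℝ)))) ∂μ
  set b := ∑ r ∈ Finset.range M, ∫ x, log (max (ψ r x) 1) ∂μ
  have hb : ∀ r < M, ∫ x, log (max (ψ r x) 1) ∂μ ≤ b := fun r hr =>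
    Finset.single_le_sum (f := fun r => ∫ x, log (max (ψ r x) 1) ∂μ)
      (fun r _ => integral_nonneg fun x => log_nonneg (le_max_right _ _)) (Finset.mem_range.2 hr)
  refine EReal.le_of_forall_lt_iff_le.1 fun t ht => ?_
  set δ := t - (truncLogRate ψ μ M R + ε)
  have hδ : 0 < δ := sub_pos.2 (EReal.coe_lt_coe_iff.1 ht)
  refine EReal.limsup_inv_mul_le_of_eventually_le ?_
  filter_upwards [hdom, tendsto_natCast_atTop_atTop.eventually_ge_atTop ((|c| + b) / δ)]
    with n hn hnδ
  obtain ⟨q, r, hr, rfl⟩ : ∃ q r, r < M ∧ n = q * M + r :=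
    ⟨n / M, n % M, Nat.mod_lt _ hM, (Nat.div_add_mod' n M).symm⟩
  have hrc : -|c| ≤ (r / M : ℝ) * c := by
    have : (r / M : ℝ) ≤ 1 := (div_le_one (by positivity)).2 (by exact_mod_cast hr.le)
    nlinarith [neg_abs_le c, abs_nonneg c, (by positivity : (0 : ℝ) ≤ r / M)]
  have hN : ((q * M + r : ℕ) : ℝ) * t
      = q * c + (r / M : ℝ) * c + (q * M + r : ℕ) * ε + (q * M + r : ℕ) * δ := by
    simp only [δ, truncLogRate]
    push_cast
    field_simp
    ring
  have hcb : |c| + b ≤ (q * M + r : ℕ) * δ := by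
    rw [div_le_iff₀ hδ] at hnδ
    linarith
  refine (hψ.elogInt_le hT (hφ _) (by positivity) R hn).trans (EReal.coe_le_coe_iff.2 ?_)
  linarith [hb r hr]

lemma exists_truncLogRate_lt_of_potStar_lt [IsProbabilityMeasure μ] (hφ : IsPotential φ)
    (hψ : ∀ n, Continuous (ψ n)) {ε : ℝ} (hε : 0 ≤ ε)
    (hdom : ∀ᶠ n in atTop, ∀ x, ψ n x ≤ exp (n * ε) * φ n x) {s : ℝ} (hs : potStar μ φ < s) :
    ∃ M, 0 < M ∧ ∃ R, truncLogRate ψ μ M R < s + ε := by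
  obtain ⟨n, hn_lt, hn_dom, hn0⟩ :=
    ((eventually_lt_of_limsup_lt hs).and (hdom.and (eventually_gt_atTop 0))).exists
  have hn : (0 : ℝ) < n := Nat.cast_pos.2 hn0
  obtain ⟨R, hR⟩ := iInf_lt_iff.1 (EReal.lt_mul_of_inv_mul_lt hn hn_lt)
  have hψφ := integral_log_max_le_of_le_exp_mul (μ := μ) (hψ n) (hφ n).1 (hφ n).2
    (by positivity) (exp_pos (-(R : ℝ))) hn_dom
  refine ⟨n, hn0, R, ?_⟩
  rw [truncLogRate, inv_mul_lt_iff₀ hn, mul_add]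
  linarith [EReal.coe_lt_coe_iff.1 hR]

lemma continuous_truncLogRate {M : ℕ} (hψ : Continuous (ψ M)) (R : ℕ) :
    Continuous fun ν : ProbabilityMeasure X => truncLogRate ψ ν M R :=
  continuous_const.mul
    (ProbabilityMeasure.continuous_integral_continuousMap
      (⟨_, hψ.log_max (exp_pos _)⟩ : C(X, ℝ)))

lemma potStar_eq_iInf_truncLogRate [IsProbabilityMeasure μ] (hT : MeasurePreserving T μ μ)
    (hφ : IsPotential φ) {ψ : ℕ → ℕ → X → ℝ} (hψ : ∀ k, IsSubAdditivePot T (ψ k))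
    {ε : ℕ → ℝ} (hε : ∀ k, 0 ≤ ε k) (hε0 : Tendsto ε atTop (𝓝 0))
    (hφψ : ∀ k, ∀ᶠ n in atTop, ∀ x, φ n x ≤ exp (n * ε k) * ψ k n x)
    (hψφ : ∀ k, ∀ᶠ n in atTop, ∀ x, ψ k n x ≤ exp (n * ε k) * φ n x) :
    potStar μ φ =
      ⨅ p : ℕ × ℕ × ℕ, ((truncLogRate (ψ p.1) μ (p.2.1 + 1) p.2.2 + ε p.1 : ℝ) : EReal) := by
  refine le_antisymm (le_iInf fun p => potStar_le_truncLogRate_add hT (fun n => (hφ n).1)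
    (hψ p.1) (hε p.1) (hφψ p.1) p.2.1.succ_pos p.2.2) ?_
  refine EReal.le_of_forall_lt_iff_le.1 fun t ht => ?_
  obtain ⟨s, hs, hst⟩ := EReal.exists_between_coe_real ht
  have hst' : 0 < (t - s) / 2 := half_pos (sub_pos.2 (EReal.coe_lt_coe_iff.1 hst))
  obtain ⟨k, hk⟩ := (hε0.eventually (gt_mem_nhds hst')).exists
  obtain ⟨M, hM, R, hR⟩ :=
    exists_truncLogRate_lt_of_potStar_lt hφ (fun n => ((hψ k).1 n).1) (hε k) (hψφ k) hs
  obtain ⟨m, rfl⟩ := Nat.exists_eq_add_one_of_ne_zero hM.ne'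
  refine (iInf_le _ (k, m, R)).trans (EReal.coe_le_coe_iff.2 ?_)
  linarith

lemma exists_potStar_le (hφ : ∀ n, Continuous (φ n)) (hψ : IsSubAdditivePot T ψ) {ε : ℝ}
    (hε : 0 ≤ ε) (hdom : ∀ᶠ n in atTop, ∀ x, φ n x ≤ exp (n * ε) * ψ n x) :
    ∃ C : ℝ, ∀ (μ : Measure X) [IsProbabilityMeasure μ], MeasurePreserving T μ μ →
      potStar μ φ ≤ C := by
  have hcont : Continuous fun x => log (max (ψ 1 x) 1) := (hψ.1 1).1.log_max one_pos
  obtain ⟨C, hC⟩ := (isCompact_range hcont).bddAbove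
  refine ⟨C + ε, fun μ _ hT => (potStar_le_truncLogRate_add hT hφ hψ hε hdom one_pos 0).trans
    (EReal.coe_le_coe_iff.2 ?_)⟩
  have hint : ∫ x, log (max (ψ 1 x) 1) ∂μ ≤ C :=
    (integral_mono hcont.integrable_of_compactSpace (integrable_const C)
      fun x => hC ⟨x, rfl⟩).trans_eq (by simp)
  simp only [truncLogRate, Nat.cast_one, inv_one, one_mul, Nat.cast_zero, neg_zero, exp_zero]
  linarith

end Potential

theorem stmt6_general {X : Type*} [MetricSpace X] [CompactSpace X] [MeasurableSpace X] [BorelSpace X]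
    (T : X → X) (hT : Continuous T) (φ : ℕ → X → ℝ)
    (hφ : IsAsympSubAdditive T φ) :
    UpperSemicontinuousOn
      (fun μ : MeasureTheory.ProbabilityMeasure X => potStar (μ : MeasureTheory.Measure X) φ)
      {μ : MeasureTheory.ProbabilityMeasure X |
        (μ : MeasureTheory.Measure X).map T = (μ : MeasureTheory.Measure X)} ∧
    ∃ C : ℝ, ∀ μ : MeasureTheory.Measure X, InvProb T μ → potStar μ φ ≤ (C : EReal) := by
  obtain ⟨hφ, happrox⟩ := hφ
  set ε : ℕ → ℝ := fun k => 1 / ((k : ℝ) + 1)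
  have hε (k : ℕ) : 0 < ε k := Nat.one_div_pos_of_nat
  choose ψ hψ happ using fun k => happrox (ε k / 2) (half_pos (hε k))
  have hφψ (k : ℕ) := (happ k).eventually_le_exp_mul (fun n => (hφ n).2)
    (fun n => ((hψ k).1 n).2) (half_lt_self (hε k))
  have hψφ (k : ℕ) := (happ k).symm.eventually_le_exp_mul (fun n => ((hψ k).1 n).2)
    (fun n => (hφ n).2) (half_lt_self (hε k))
  have hmp {μ : Measure X} (hμ : μ.map T = μ) : MeasurePreserving T μ μ := ⟨hT.measurable, hμ⟩
  refine ⟨?_, ?_⟩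
  · have husc : UpperSemicontinuous fun ν : ProbabilityMeasure X =>
        ⨅ p : ℕ × ℕ × ℕ, ((truncLogRate (ψ p.1) ν (p.2.1 + 1) p.2.2 + ε p.1 : ℝ) : EReal) :=
      upperSemicontinuous_iInf fun p => (continuous_coe_real_ereal.comp
        ((continuous_truncLogRate ((hψ p.1).1 _).1 p.2.2).add continuous_const)).upperSemicontinuous
    exact (husc.upperSemicontinuousOn _).congr fun ρ hρ =>
      (potStar_eq_iInf_truncLogRate (hmp hρ) hφ hψ (fun k => (hε k).le)
        tendsto_one_div_add_atTop_nhds_zero_nat hφψ hψφ).symm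
  · obtain ⟨C, hC⟩ := exists_potStar_le (fun n => (hφ n).1) (hψ 0) (hε 0).le (hφψ 0)
    exact ⟨C, fun μ ⟨_, hμ⟩ => hC μ (hmp hμ)⟩

/-- `μ ↦ Φ_*(μ)` is upper semi-continuous on the invariant measures
(weak* topology), and is uniformly bounded above by a real constant. -/
theorem stmt6 {X : Type*} [MetricSpace X] [CompactSpace X] [MeasurableSpace X] [BorelSpace X] [Nonempty X]
    (T : X → X) (hT : Continuous T) (φ : ℕ → X → ℝ)
    (hφ : IsAsympSubAdditive T φ) :
    UpperSemicontinuousOn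
      (fun μ : MeasureTheory.ProbabilityMeasure X => potStar (μ : MeasureTheory.Measure X) φ)
      {μ : MeasureTheory.ProbabilityMeasure X |
        (μ : MeasureTheory.Measure X).map T = (μ : MeasureTheory.Measure X)} ∧
    ∃ C : ℝ, ∀ μ : MeasureTheory.Measure X, InvProb T μ → potStar μ φ ≤ (C : EReal) :=
  stmt6_general T hT φ hφ
end

section
/- Let (X,T) be a TDS, k ≥ 1, Φ_1, …, Φ_k asymptotically sub-additive potentials, a = (a_1,…,a_k) ∈ ℝ^k, ε > 0, and G(a, n, ε) = {x ∈ X : |(1/ℓ) log φ_{ℓ,i}(x) - a_i| < ε for all 1 ≤ i ≤ k and all ℓ ≥ n}. If G(a,n,ε) ≠ ∅, then for any q = (q_1,…,q_k) with all q_i > 0, h_top(T, G(a,n,ε)) ≤ P_Φ(q) - Σ_{i=1}^k (a_i - ε) q_i, where P_Φ(q) := P(T, Σ_i q_i Φ_i). -/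
open MeasureTheory Filter Topology Set
open scoped ENNReal NNReal

/-- The set `G(a, n, ε)` of points whose Lyapunov averages are `ε`-close to `a`
at all times `ℓ ≥ n`. -/
def lyapG {X : Type*} {k : ℕ} (φ : Fin k → ℕ → X → ℝ) (a : Fin k → ℝ) (n : ℕ) (ε : ℝ) :
    Set X :=
  {x | ∀ i, ∀ ℓ, n ≤ ℓ → 0 < φ i ℓ x ∧ |Real.log (φ i ℓ x) / (ℓ : ℝ) - a i| < ε}

/-! A point of `G(a, n, ε)` has `q • Φ`-weight at least `exp (ℓ c)`, `c = ∑ (aᵢ - ε) qᵢ`, at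
every time `ℓ ≥ n`. So a maximal `(ℓ, δ / 2)`-separated subset `E` of `G` has
`#E * exp (ℓ c) ≤ P_ℓ(T, q • Φ, δ / 2) ≤ exp (ℓ t)` for any `t` above the pressure and `ℓ` large,
while the `(ℓ, δ)`-Bowen balls around `E` cover `G`. For `s > t - c` the weight `#E * exp (-s ℓ)`
of these covers tends to `0`, hence `M(G, s, δ) = 0` and `h_top(T, G) ≤ s`. -/

theorem tendsto_ofReal_exp_neg_mul_natCast {r : ℝ} (hr : 0 < r) :
    Tendsto (fun ℓ : ℕ => ENNReal.ofReal (Real.exp (-(r * ℓ)))) atTop (𝓝 0) := by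
  simpa using ENNReal.tendsto_ofReal (Real.tendsto_exp_atBot.comp
    (tendsto_neg_atTop_atBot.comp (tendsto_natCast_atTop_atTop.const_mul_atTop hr)))

theorem inv_mul_elogENN_lt_iff {r : ℝ} (hr : 0 < r) {S : ℝ≥0∞} {b : ℝ} :
    ((r⁻¹ : ℝ) : EReal) * elogENN S < b ↔ S < ENNReal.ofReal (Real.exp (r * b)) := by
  rcases eq_or_ne S 0 with rfl | hS0
  · simp [elogENN, EReal.coe_mul_bot_of_pos (inv_pos.2 hr), Real.exp_pos]
  rcases eq_or_ne S ⊤ with rfl | hStop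
  · simp [elogENN, EReal.coe_mul_top_of_pos (inv_pos.2 hr)]
  rw [elogENN, if_neg hS0, if_neg hStop, ← EReal.coe_mul, EReal.coe_lt_coe_iff,
    ENNReal.lt_ofReal_iff_toReal_lt hStop,
    ← Real.log_lt_iff_lt_exp (ENNReal.toReal_pos hS0 hStop), inv_mul_lt_iff₀ hr]

theorem exp_mul_le_weightedPot {X : Type*} {k : ℕ} {φ : Fin k → ℕ → X → ℝ} {a q : Fin k → ℝ}
    {ε : ℝ} {n ℓ : ℕ} {x : X} (hq : ∀ i, 0 ≤ q i) (hx : x ∈ lyapG φ a n ε) (hnℓ : n ≤ ℓ)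
    (hℓ : 0 < ℓ) :
    Real.exp (ℓ * ∑ i, (a i - ε) * q i) ≤ weightedPot φ q ℓ x := by
  have hℓ' : (0 : ℝ) < ℓ := Nat.cast_pos.2 hℓ
  have hlog : ∀ i, ℓ * (a i - ε) ≤ Real.log (φ i ℓ x) := fun i => by
    have h := (abs_lt.1 (hx i ℓ hnℓ).2).1
    rw [lt_sub_iff_add_lt, ← sub_eq_neg_add, lt_div_iff₀ hℓ'] at h
    linarith
  rw [weightedPot, Finset.mul_sum, Real.exp_sum]
  refine Finset.prod_le_prod (fun i _ => (Real.exp_pos _).le) fun i _ => ?_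
  rw [Real.rpow_def_of_pos (hx i ℓ hnℓ).1, ← mul_assoc]
  exact Real.exp_le_exp.2 (mul_le_mul_of_nonneg_right (hlog i) (hq i))

section

variable {X : Type*} [MetricSpace X]

theorem isSep_singleton (T : X → X) (ℓ : ℕ) (δ : ℝ) (x : X) : IsSep T ℓ δ {x} :=
  fun u hu v hv huv => by
    simp only [Finset.mem_singleton] at hu hv
    exact absurd (hu.trans hv.symm) huv

theorem exists_card_le_of_isSep [CompactSpace X] (T : X → X) (ℓ : ℕ) {δ : ℝ} (hδ : 0 < δ) :
    ∃ K : ℕ, ∀ E : Finset X, IsSep T ℓ δ E → E.card ≤ K := by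
  -- Pass to orbit segments in the compact space `Fin ℓ → X` with the sup distance, and cover it
  -- by finitely many `δ / 2`-balls: a `δ`-separated set has at most one point per ball.
  set orbit : X → Fin ℓ → X := fun x m => T^[m] x
  obtain ⟨t, ht, hcover⟩ := Metric.totallyBounded_iff.1
    (isCompact_univ (X := Fin ℓ → X)).totallyBounded (δ / 2) (half_pos hδ)
  have hcenter : ∀ x, ∃ c ∈ t, orbit x ∈ Metric.ball c (δ / 2) := fun x => by
    simpa using hcover (Set.mem_univ (orbit x))
  choose center hcenter_mem hcenter_dist using hcenter
  refine ⟨ht.toFinset.card, fun E hE => ?_⟩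
  refine Finset.card_le_card_of_injOn center (fun x _ => ht.mem_toFinset.2 (hcenter_mem x)) ?_
  intro x hx y hy hxy
  by_contra hne
  obtain ⟨m, hm, hsep⟩ := hE x hx y hy hne
  have hclose : dist (orbit x) (orbit y) < δ := by
    calc dist (orbit x) (orbit y) ≤ dist (orbit x) (center x) + dist (orbit y) (center y) := by
          rw [hxy]; exact dist_triangle_right _ _ _
      _ < δ / 2 + δ / 2 := add_lt_add (hcenter_dist x) (hcenter_dist y)
      _ = δ := add_halves δ
  have := dist_le_pi_dist (orbit x) (orbit y) ⟨m, hm⟩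
  linarith

theorem exists_isSep_subset_biUnion_dynBall [CompactSpace X] (T : X → X) (ℓ : ℕ) {δ ε : ℝ}
    (hδ : 0 < δ) (hδε : δ < ε) (Z : Set X) :
    ∃ E : Finset X, ↑E ⊆ Z ∧ IsSep T ℓ δ E ∧ Z ⊆ ⋃ x ∈ E, dynBall T x ℓ ε := by
  classical
  obtain ⟨K, hK⟩ := exists_card_le_of_isSep T ℓ hδ
  set sizes : Set ℕ := {m | ∃ E : Finset X, ↑E ⊆ Z ∧ IsSep T ℓ δ E ∧ E.card = m}
  have hbdd : BddAbove sizes := ⟨K, fun m ⟨E, _, hE, hm⟩ => hm ▸ hK E hE⟩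
  have hempty : 0 ∈ sizes := ⟨∅, by simp, by simp [IsSep], rfl⟩
  obtain ⟨E, hEZ, hE, hEcard⟩ : sSup sizes ∈ sizes := Nat.sSup_mem ⟨0, hempty⟩ hbdd
  refine ⟨E, hEZ, hE, fun y hy => ?_⟩
  by_contra hfar
  simp only [Set.mem_iUnion, not_exists] at hfar
  have hfar' : ∀ x ∈ E, ∃ m < ℓ, δ < dist (T^[m] x) (T^[m] y) := fun x hx => by
    have := hfar x hx
    simp only [dynBall, Set.mem_ofPred_eq, not_forall, not_lt] at this
    obtain ⟨m, hm, hdist⟩ := this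
    exact ⟨m, hm, hδε.trans_le hdist⟩
  have hyE : y ∉ E := fun hyE => hfar y hyE fun m _ => by simpa using hδ.trans hδε
  have hsep : IsSep T ℓ δ (insert y E) := by
    intro u hu v hv huv
    rcases Finset.mem_insert.1 hu with rfl | huE
    · rcases Finset.mem_insert.1 hv with rfl | hvE
      · exact absurd rfl huv
      · simpa only [dist_comm] using hfar' v hvE
    · rcases Finset.mem_insert.1 hv with rfl | hvE
      · exact hfar' u huE
      · exact hE u huE v hvE huv
  have hmem : E.card + 1 ∈ sizes :=
    ⟨insert y E, by simpa using Set.insert_subset hy hEZ, hsep, Finset.card_insert_of_notMem hyE⟩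
  have := le_csSup hbdd hmem
  omega

theorem card_mul_le_sepSum {T : X → X} {ψ : ℕ → X → ℝ} {ℓ : ℕ} {δ b : ℝ} {E : Finset X}
    (hE : IsSep T ℓ δ E) (hb : ∀ x ∈ E, b ≤ ψ ℓ x) :
    E.card * ENNReal.ofReal b ≤ sepSum T ψ ℓ δ :=
  calc (E.card : ℝ≥0∞) * ENNReal.ofReal b = ∑ _x ∈ E, ENNReal.ofReal b := by
        rw [Finset.sum_const, nsmul_eq_mul]
    _ ≤ ∑ x ∈ E, ENNReal.ofReal (ψ ℓ x) :=
        Finset.sum_le_sum fun x hx => ENNReal.ofReal_le_ofReal (hb x hx)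
    _ ≤ sepSum T ψ ℓ δ := le_iSup₂_of_le E hE le_rfl

theorem coe_le_pressure {T : X → X} {Z : Set X} (hZ : Z.Nonempty) {ψ : ℕ → X → ℝ} {c : ℝ}
    (hψ : ∀ᶠ ℓ : ℕ in atTop, ∀ x ∈ Z, Real.exp (ℓ * c) ≤ ψ ℓ x) :
    (c : EReal) ≤ pressure T ψ := by
  obtain ⟨x, hx⟩ := hZ
  have hbound : ∀ᶠ ℓ : ℕ in atTop,
      (c : EReal) ≤ (((ℓ : ℝ)⁻¹ : ℝ) : EReal) * elogENN (sepSum T ψ ℓ 1) := by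
    filter_upwards [hψ, eventually_gt_atTop 0] with ℓ hℓψ hℓ
    refine not_lt.1 fun hlt => ((inv_mul_elogENN_lt_iff (Nat.cast_pos.2 hℓ)).1 hlt).not_ge ?_
    simpa using card_mul_le_sepSum (isSep_singleton T ℓ 1 x)
      (fun u hu => (Finset.mem_singleton.1 hu) ▸ hℓψ x hx)
  exact (le_limsup_of_frequently_le hbound.frequently).trans (le_iSup₂_of_le 1 one_pos le_rfl)

theorem bowenM_le_of_subset_biUnion [Nonempty X] {T : X → X} {Z : Set X} {s : ℝ} {N ℓ : ℕ}
    (hNℓ : N ≤ ℓ) {δ : ℝ} {E : Finset X} (hZ : Z ⊆ ⋃ x ∈ E, dynBall T x ℓ δ) :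
    bowenM T Z s N δ ≤
      (E.card + (1 - ENNReal.ofReal (Real.exp (-s)))⁻¹) *
        ENNReal.ofReal (Real.exp (-(s * ℓ))) := by
  set L := E.toList
  set r := ENNReal.ofReal (Real.exp (-s))
  set v := ENNReal.ofReal (Real.exp (-(s * ℓ)))
  -- The balls around `E` at time `ℓ` are padded by balls at the times `ℓ + j` (the definition of
  -- `bowenM` asks for a sequence of balls), whose weights `r ^ j * v` form a geometric series.
  let cover : ℕ → X × ℕ := fun j =>
    if h : j < L.length then (L[j], ℓ) else (Classical.arbitrary X, ℓ + j)
  have hcover_time : ∀ j, N ≤ (cover j).2 := fun j => by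
    by_cases h : j < L.length <;> simp only [cover, h, dite_true, dite_false] <;> omega
  have hcover : Z ⊆ ⋃ j, dynBall T (cover j).1 (cover j).2 δ := fun y hy => by
    obtain ⟨x, hxE, hyx⟩ := Set.mem_iUnion₂.1 (hZ hy)
    obtain ⟨j, hj, rfl⟩ := List.mem_iff_getElem.1 (Finset.mem_toList.2 hxE)
    exact Set.mem_iUnion.2 ⟨j, by simpa only [cover, L, hj, dite_true] using hyx⟩
  have hweight : ∀ j, ENNReal.ofReal (Real.exp (-(s * (cover j).2))) ≤
      (if j < L.length then v else 0) + r ^ j * v := fun j => by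
    by_cases h : j < L.length
    · simp [cover, h, v]
    · simp only [cover, h, dite_false, if_false, zero_add, r, v]
      rw [← ENNReal.ofReal_pow (Real.exp_nonneg _), ← ENNReal.ofReal_mul (by positivity),
        ← Real.exp_nat_mul, ← Real.exp_add]
      exact le_of_eq (by push_cast; ring_nf)
  calc bowenM T Z s N δ ≤ ∑' j, ENNReal.ofReal (Real.exp (-(s * (cover j).2))) :=
        iInf_le_of_le cover (iInf_le_of_le hcover_time (iInf_le _ hcover))
    _ ≤ ∑' j, ((if j < L.length then v else 0) + r ^ j * v) := ENNReal.tsum_le_tsum hweight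
    _ = (E.card + (1 - r)⁻¹) * v := by
        rw [ENNReal.tsum_add, ENNReal.tsum_mul_right, ENNReal.tsum_geometric,
          tsum_eq_sum (s := Finset.range L.length) (by simp_all), add_mul]
        simp [L, Finset.sum_ite_of_true]

theorem bowenM_le_of_sepSum_le [CompactSpace X] [Nonempty X] {T : X → X} {Z : Set X}
    {ψ : ℕ → X → ℝ} {c t s δ : ℝ} {N ℓ : ℕ} (hNℓ : N ≤ ℓ) (hδ : 0 < δ)
    (hψ : ∀ x ∈ Z, Real.exp (ℓ * c) ≤ ψ ℓ x)
    (hsepSum : sepSum T ψ ℓ (δ / 2) ≤ ENNReal.ofReal (Real.exp (ℓ * t))) :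
    bowenM T Z s N δ ≤ ENNReal.ofReal (Real.exp (-((s + c - t) * ℓ))) +
      (1 - ENNReal.ofReal (Real.exp (-s)))⁻¹ * ENNReal.ofReal (Real.exp (-(s * ℓ))) := by
  obtain ⟨E, hEZ, hE, hcover⟩ :=
    exists_isSep_subset_biUnion_dynBall T ℓ (half_pos hδ) (half_lt_self hδ) Z
  have hcard : (E.card : ℝ≥0∞) * ENNReal.ofReal (Real.exp (ℓ * c)) ≤
      ENNReal.ofReal (Real.exp (ℓ * t)) :=
    (card_mul_le_sepSum hE fun x hx => hψ x (hEZ hx)).trans hsepSum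
  have hsplit : ∀ u : ℝ, ENNReal.ofReal (Real.exp (u - (s + c) * ℓ)) =
      ENNReal.ofReal (Real.exp u) * ENNReal.ofReal (Real.exp (-((s + c) * ℓ))) := fun u => by
    rw [← ENNReal.ofReal_mul (Real.exp_nonneg _), ← Real.exp_add, sub_eq_add_neg]
  have hcard' : (E.card : ℝ≥0∞) * ENNReal.ofReal (Real.exp (-(s * ℓ))) ≤
      ENNReal.ofReal (Real.exp (-((s + c - t) * ℓ))) :=
    calc (E.card : ℝ≥0∞) * ENNReal.ofReal (Real.exp (-(s * ℓ)))
        = E.card * ENNReal.ofReal (Real.exp (ℓ * c)) *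
            ENNReal.ofReal (Real.exp (-((s + c) * ℓ))) := by
          rw [mul_assoc, ← hsplit]; ring_nf
      _ ≤ ENNReal.ofReal (Real.exp (ℓ * t)) * ENNReal.ofReal (Real.exp (-((s + c) * ℓ))) := by
          gcongr
      _ = ENNReal.ofReal (Real.exp (-((s + c - t) * ℓ))) := by rw [← hsplit]; ring_nf
  calc bowenM T Z s N δ ≤ (E.card + (1 - ENNReal.ofReal (Real.exp (-s)))⁻¹) *
        ENNReal.ofReal (Real.exp (-(s * ℓ))) := bowenM_le_of_subset_biUnion hNℓ hcover
    _ ≤ _ := by rw [add_mul]; gcongr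

theorem iSup_bowenM_eq_zero [CompactSpace X] {T : X → X} {Z : Set X} (hZ : Z.Nonempty)
    {ψ : ℕ → X → ℝ} {c : ℝ} (hψ : ∀ᶠ ℓ : ℕ in atTop, ∀ x ∈ Z, Real.exp (ℓ * c) ≤ ψ ℓ x)
    {δ : ℝ} (hδ : 0 < δ) {s : ℝ} (hs : pressure T ψ < ((s + c : ℝ) : EReal)) :
    ⨆ N, bowenM T Z s N δ = 0 := by
  have := hZ.to_type
  obtain ⟨t, hPt, hts'⟩ := EReal.lt_iff_exists_real_btwn.1 hs
  have hct : c < t := EReal.coe_lt_coe_iff.1 ((coe_le_pressure hZ hψ).trans_lt hPt)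
  have hts : t < s + c := EReal.coe_lt_coe_iff.1 hts'
  have hs0 : 0 < s := by linarith
  have hη : 0 < s + c - t := by linarith
  have hsepSum : ∀ᶠ ℓ : ℕ in atTop,
      sepSum T ψ ℓ (δ / 2) ≤ ENNReal.ofReal (Real.exp (ℓ * t)) := by
    have hlimsup : limsup (fun ℓ : ℕ => (((ℓ : ℝ)⁻¹ : ℝ) : EReal) *
        elogENN (sepSum T ψ ℓ (δ / 2))) atTop < t :=
      (le_iSup₂_of_le (δ / 2) (half_pos hδ) le_rfl).trans_lt hPt
    filter_upwards [eventually_lt_of_limsup_lt hlimsup, eventually_gt_atTop 0] with ℓ hℓ hℓ0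
    exact ((inv_mul_elogENN_lt_iff (Nat.cast_pos.2 hℓ0)).1 hℓ).le
  have hK : (1 - ENNReal.ofReal (Real.exp (-s)))⁻¹ ≠ ⊤ :=
    ENNReal.inv_ne_top.2 (tsub_pos_of_lt (ENNReal.ofReal_lt_one.2
      (Real.exp_lt_one_iff.2 (neg_neg_of_pos hs0)))).ne'
  have hlim := (tendsto_ofReal_exp_neg_mul_natCast hη).add
    (ENNReal.Tendsto.const_mul (tendsto_ofReal_exp_neg_mul_natCast hs0) (Or.inr hK))
  rw [mul_zero, add_zero] at hlim
  refine ENNReal.iSup_eq_zero.2 fun N => le_zero_iff.1 (ge_of_tendsto hlim ?_)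
  filter_upwards [hψ, hsepSum, eventually_ge_atTop N] with ℓ hℓψ hℓsep hNℓ
  exact bowenM_le_of_sepSum_le hNℓ hδ hℓψ hℓsep

theorem entOf_le_pressure_sub [CompactSpace X] {T : X → X} {Z : Set X} (hZ : Z.Nonempty)
    {ψ : ℕ → X → ℝ} {c : ℝ} (hψ : ∀ᶠ ℓ : ℕ in atTop, ∀ x ∈ Z, Real.exp (ℓ * c) ≤ ψ ℓ x) :
    entOf T Z ≤ pressure T ψ - c := by
  refine iSup₂_le fun δ hδ => le_of_forall_gt_imp_ge_of_dense fun d hd => ?_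
  obtain ⟨s, hs, hsd⟩ := EReal.lt_iff_exists_real_btwn.1 hd
  have hsc : pressure T ψ < ((s + c : ℝ) : EReal) := by
    rw [EReal.coe_add]
    exact (EReal.sub_lt_iff (Or.inl (EReal.coe_ne_bot c)) (Or.inl (EReal.coe_ne_top c))).1 hs
  exact (sInf_le ⟨s, rfl, iSup_bowenM_eq_zero hZ hψ hδ hsc⟩ : entAt T Z δ ≤ s).trans hsd.le

end

theorem stmt13_general {X : Type*} [MetricSpace X] [CompactSpace X] {k : ℕ}
    (T : X → X) (φ : Fin k → ℕ → X → ℝ)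
    (a : Fin k → ℝ) (ε : ℝ) (n : ℕ)
    (hne : (lyapG φ a n ε).Nonempty)
    (q : Fin k → ℝ) (hq : ∀ i, 0 < q i) :
    entOf T (lyapG φ a n ε) ≤
      pressure T (weightedPot φ q) - (((∑ i, (a i - ε) * q i) : ℝ) : EReal) := by
  refine entOf_le_pressure_sub hne ?_
  filter_upwards [eventually_ge_atTop n, eventually_gt_atTop 0] with ℓ hnℓ hℓ x hx
  exact exp_mul_le_weightedPot (fun i => (hq i).le) hx hnℓ hℓ

/-- Lemma 4.3(i): entropy bound `h_top(T, G(a,n,ε)) ≤ P_Φ(q) - ∑ (a_i - ε) q_i`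
for positive `q`. -/
theorem stmt13 {X : Type*} [MetricSpace X] [CompactSpace X] [MeasurableSpace X] [BorelSpace X] [Nonempty X] {k : ℕ}
    (T : X → X) (hT : Continuous T) (φ : Fin k → ℕ → X → ℝ)
    (hφ : ∀ i, IsAsympSubAdditive T (φ i))
    (a : Fin k → ℝ) (ε : ℝ) (hε : 0 < ε) (n : ℕ) (hn : 0 < n)
    (hne : (lyapG φ a n ε).Nonempty)
    (q : Fin k → ℝ) (hq : ∀ i, 0 < q i) :
    entOf T (lyapG φ a n ε) ≤
      pressure T (weightedPot φ q) - (((∑ i, (a i - ε) * q i) : ℝ) : EReal) :=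
  stmt13_general T φ a ε n hne q hq
end
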